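/- Let 0 < q < 1, s ∈ ℝ and n ≥ 1. Then H_n(x,s|q) - H_n(qx,s|q) = (1-q)·x·{n}_q·H_{n-1}(x,s|q) as polynomials in x; equivalently, D_q H_n(x,s|q) = {n}_q·H_{n-1}(x,s|q). -/

import Mathlib

/-- The q-number `{n}_q = 1 + q + ⋯ + q^{n-1}`. -/
noncomputable def qNum (q : ℝ) (n : ℕ) : ℝ := ∑ k ∈ Finset.range n, q ^ k

/-- The q-factorial `{n}_q! = Π_{k=1}^n {k}_q`. -/
noncomputable def qFact (q : ℝ) (n : ℕ) : ℝ := ∏ k ∈ Finset.range n, qNum q (k + 1)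

/-- The even q-double factorial `{2k}_q!! = Π_{l=1}^k {2l}_q`. -/
noncomputable def qDoubleFact (q : ℝ) (k : ℕ) : ℝ := ∏ l ∈ Finset.range k, qNum q (2 * (l + 1))

/-- The q-Hermite polynomial `H_n(x,s|q) = Σ_{k=0}^{⌊n/2⌋} (-1)^k q^{k(k-1)}
({n}_q!/({n-2k}_q!·{2k}_q!!)) s^k x^{n-2k}`. -/
noncomputable def qHermite (q s : ℝ) (n : ℕ) : Polynomial ℝ :=
  ∑ k ∈ Finset.range (n / 2 + 1),
    Polynomial.C ((-1 : ℝ) ^ k * q ^ (k * (k - 1)) *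
        (qFact q n / (qFact q (n - 2 * k) * qDoubleFact q k)) * s ^ k) *
      Polynomial.X ^ (n - 2 * k)

/-- The q-derivative on polynomials: it sends `x^j` to `{j}_q x^{j-1}`. -/
noncomputable def qDeriv (q : ℝ) (f : Polynomial ℝ) : Polynomial ℝ :=
  f.sum fun j a => Polynomial.C (a * qNum q j) * Polynomial.X ^ (j - 1)

/-!
Since `x^j - (qx)^j = (1 - q) {j}_q x^j`, every polynomial satisfies
`f(x) - f(qx) = (1 - q) x D_q f(x)`, so only `D_q H_n = {n}_q H_{n-1}` needs proof. Termwise,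
`D_q` multiplies the coefficient of `x^{n-2k}` by `{n-2k}_q`, which cancels against
`{n}_q! / {n-2k}_q! = {n}_q {n-1}_q! / {n-1-2k}_q!`; the constant term present when `n` is even
is killed by `D_q`, as `{0}_q = 0`.
-/

open Polynomial Finset

lemma qNum_pos {q : ℝ} (hq : 0 ≤ q) {m : ℕ} (hm : m ≠ 0) : 0 < qNum q m :=
  sum_pos' (fun i _ => pow_nonneg hq i) ⟨0, mem_range.mpr (Nat.pos_of_ne_zero hm), by simp⟩

lemma qFact_succ (q : ℝ) (m : ℕ) : qFact q (m + 1) = qFact q m * qNum q (m + 1) :=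
  prod_range_succ _ _

lemma qFact_ne_zero {q : ℝ} (hq : 0 ≤ q) (m : ℕ) : qFact q m ≠ 0 :=
  (prod_pos fun _ _ => qNum_pos hq (Nat.succ_ne_zero _)).ne'

lemma qDoubleFact_ne_zero {q : ℝ} (hq : 0 ≤ q) (k : ℕ) : qDoubleFact q k ≠ 0 :=
  (prod_pos fun _ _ => qNum_pos hq (by omega)).ne'

lemma qDeriv_add (q : ℝ) (f g : ℝ[X]) : qDeriv q (f + g) = qDeriv q f + qDeriv q g :=
  sum_add_index _ _ _ (fun _ => by simp) fun _ _ _ => by rw [add_mul, C_add, add_mul]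

lemma qDeriv_sum {ι : Type*} (q : ℝ) (t : Finset ι) (f : ι → ℝ[X]) :
    qDeriv q (∑ i ∈ t, f i) = ∑ i ∈ t, qDeriv q (f i) :=
  map_sum (AddMonoidHom.mk' (qDeriv q) (qDeriv_add q)) f t

lemma qDeriv_monomial (q a : ℝ) (m : ℕ) :
    qDeriv q (monomial m a) = C (a * qNum q m) * X ^ (m - 1) :=
  sum_monomial_index _ _ (by simp)

lemma qDeriv_C_mul_X_pow (q a : ℝ) (m : ℕ) :
    qDeriv q (C a * X ^ m) = C (a * qNum q m) * X ^ (m - 1) := by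
  rw [C_mul_X_pow_eq_monomial, qDeriv_monomial]

theorem sub_comp_C_mul_X_eq_qDeriv (q : ℝ) (f : ℝ[X]) :
    f - f.comp (C q * X) = C (1 - q) * X * qDeriv q f := by
  induction f using Polynomial.induction_on' with
  | add f g hf hg => rw [add_comp, qDeriv_add]; linear_combination hf + hg
  | monomial m a =>
    rw [qDeriv_monomial]
    rcases Nat.eq_zero_or_pos m with rfl | hm
    · simp [qNum]
    · have hXm : X * X ^ (m - 1) = (X ^ m : ℝ[X]) := by rw [← pow_succ', Nat.sub_add_cancel hm]
      have hgeom : (1 - q) * qNum q m = 1 - q ^ m := mul_neg_geom_sum q m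
      rw [← C_mul_X_pow_eq_monomial, mul_comp, C_comp, X_pow_comp, mul_pow, ← C_pow]
      calc C a * X ^ m - C a * (C (q ^ m) * X ^ m)
          = C (a * ((1 - q) * qNum q m)) * (X * X ^ (m - 1)) := by
            rw [hgeom, hXm, C_mul, C_sub, C_1]; ring
        _ = C (1 - q) * X * (C (a * qNum q m) * X ^ (m - 1)) := by
            simp only [C_mul]; ring

noncomputable def qHermiteCoeff (q s : ℝ) (n k : ℕ) : ℝ :=
  (-1 : ℝ) ^ k * q ^ (k * (k - 1)) * (qFact q n / (qFact q (n - 2 * k) * qDoubleFact q k)) * s ^ k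

lemma qHermite_eq_sum (q s : ℝ) (n : ℕ) :
    qHermite q s n = ∑ k ∈ range (n / 2 + 1), C (qHermiteCoeff q s n k) * X ^ (n - 2 * k) :=
  rfl

lemma qHermiteCoeff_succ_mul_qNum {q : ℝ} (hq : 0 ≤ q) (s : ℝ) {n k : ℕ}
    (hk : 2 * k ≤ n) :
    qHermiteCoeff q s (n + 1) k * qNum q (n + 1 - 2 * k) =
      qNum q (n + 1) * qHermiteCoeff q s n k := by
  have hsub : n + 1 - 2 * k = n - 2 * k + 1 := by omega
  have hA := qFact_ne_zero hq (n - 2 * k)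
  have hB := qDoubleFact_ne_zero hq k
  have hC := (qNum_pos hq (Nat.succ_ne_zero (n - 2 * k))).ne'
  rw [qHermiteCoeff, qHermiteCoeff, hsub, qFact_succ, qFact_succ]
  field_simp

lemma sum_range_succ_div_two_add_one {M : Type*} [AddCommMonoid M] (n : ℕ) (f : ℕ → M)
    (hf : ∀ k, 2 * k = n + 1 → f k = 0) :
    ∑ k ∈ range ((n + 1) / 2 + 1), f k = ∑ k ∈ range (n / 2 + 1), f k := by
  refine (sum_subset (range_subset_range.mpr (by omega)) fun k hk hk' => hf k ?_).symm
  simp only [mem_range] at hk hk'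
  omega

theorem qDeriv_qHermite {q : ℝ} (hq : 0 ≤ q) (s : ℝ) (n : ℕ) :
    qDeriv q (qHermite q s n) = C (qNum q n) * qHermite q s (n - 1) := by
  cases n with
  | zero =>
    simp only [qHermite_eq_sum, Nat.zero_div, zero_add, sum_range_one, qDeriv_C_mul_X_pow]
    simp [qNum]
  | succ n =>
    rw [qHermite_eq_sum, qHermite_eq_sum, qDeriv_sum, mul_sum, Nat.add_sub_cancel]
    simp only [qDeriv_C_mul_X_pow]
    rw [sum_range_succ_div_two_add_one n _ fun k hk => by simp [← hk, qNum]]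
    refine sum_congr rfl fun k hk => ?_
    have hk : 2 * k ≤ n := by rw [mem_range] at hk; omega
    rw [qHermiteCoeff_succ_mul_qNum hq s hk, C_mul, mul_assoc,
      show n + 1 - 2 * k - 1 = n - 2 * k by omega]

theorem qHermite_lowering_general (q : ℝ) (hq0 : 0 < q) (s : ℝ) (n : ℕ) :
    qHermite q s n - (qHermite q s n).comp (Polynomial.C q * Polynomial.X) =
        Polynomial.C (1 - q) * Polynomial.X * Polynomial.C (qNum q n) * qHermite q s (n - 1) ∧
      qDeriv q (qHermite q s n) = Polynomial.C (qNum q n) * qHermite q s (n - 1) := by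
  have hD := qDeriv_qHermite hq0.le s n
  refine ⟨?_, hD⟩
  rw [sub_comp_C_mul_X_eq_qDeriv, hD]
  ring

/-- Lowering relation: `H_n(x,s|q) - H_n(qx,s|q) = (1-q)·x·{n}_q·H_{n-1}(x,s|q)`;
equivalently, `D_q H_n(x,s|q) = {n}_q·H_{n-1}(x,s|q)`. -/
theorem qHermite_lowering (q : ℝ) (hq0 : 0 < q) (hq1 : q < 1) (s : ℝ) (n : ℕ) (hn : 1 ≤ n) :
    qHermite q s n - (qHermite q s n).comp (Polynomial.C q * Polynomial.X) =
        Polynomial.C (1 - q) * Polynomial.X * Polynomial.C (qNum q n) * qHermite q s (n - 1) ∧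
      qDeriv q (qHermite q s n) = Polynomial.C (qNum q n) * qHermite q s (n - 1) :=
  qHermite_lowering_general q hq0 s n
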